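/- arXiv:2411.00218 — 2 statements merged into one kernel-verified Lean document; each statement's English description precedes it below -/
import Mathlib

section
/- Let M = (π₀, K, g) be a state-space model and, for t = 1,…,T, let the gradient-ascent nudging transformation be α_t(x, γ) := x + γ∇log g_t(x). Assume: (a) |∂ log g_t(x)/∂x_i| < ∞ for every coordinate i and every t ∈ {1,…,T}; (b) each log g_t is differentiable with L_t-Lipschitz continuous gradient; (c) for each t there is a set A_t ⊆ 𝒳 with ξ_t(A_t) > 0 on which ∇log g_t(x) ≠ 0; and (d) each kernel K_t is continuous in total variation (Assumption A2(ii)) and each g_t is continuous and bounded. Then there exists a sequence of positive step sizes γ_1,…,γ_T such that p_T(y_{1:T} | M^α) ≥ p_T(y_{1:T} | M). -/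
/-!
The filters of the nudged model `M^α` are the pushforwards under `α_t` of the filters of the
model with kernels `K_t(α_{t-1}(·), ·)` and likelihoods `g_t ∘ α_t`, so the two models have the
same evidence. Take steps `γ_t = 1/(n+1)` for `t < T`. As `n → ∞` these `α_t` tend to the
identity pointwise, and continuity of the kernels in total variation and of the `g_t` makes the
filters of the second model converge to those of `M`, in the sense that integrals of uniformly
bounded, pointwise convergent integrands converge. So the first `T - 1` factors of the nudged
evidence converge to those of `p_T(y_{1:T} | M)`. At time `T` take `γ_T = 1/L_T`. By the descent
lemma, `log g_T(α_T x) ≥ log g_T(x) + ‖∇ log g_T(x)‖² / (2 L_T)`, with strict inequality on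
`A_T`, so the last factor converges to a limit strictly larger than `ξ_T(g_T)`.
-/

open MeasureTheory ENNReal

namespace Nudging

variable {X : Type*} [MeasurableSpace X]

/-- Total variation norm `‖μ - ν‖_TV = |sup_F (μ-ν)(F) - inf_F (μ-ν)(F)|` of the difference of
two (finite) measures. -/
noncomputable def tvDist (μ ν : Measure X) : ℝ :=
  ((⨆ (F : Set X) (_ : MeasurableSet F), (μ F - ν F)) +
   (⨆ (F : Set X) (_ : MeasurableSet F), (ν F - μ F))).toReal

/-- Supremum norm of a real-valued function. -/
noncomputable def supNorm {α : Type*} (f : α → ℝ) : ℝ := ⨆ x, |f x|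

/-- The (normalised) filter measures `π_t` of a state-space model `(π0, K, g)`:
`π_0 = π0` and `π_t(f) = ξ_t(f g_t)/ξ_t(g_t)` where `ξ_t = K_t π_{t-1}`. -/
noncomputable def filt (π0 : Measure X) (K : ℕ → X → Measure X) (g : ℕ → X → ℝ) :
    ℕ → Measure X
  | 0 => π0
  | t + 1 =>
      let ξ : Measure X := (filt π0 K g t).bind (K (t + 1))
      let ν : Measure X := ξ.withDensity fun x => ENNReal.ofReal (g (t + 1) x)
      (ν Set.univ)⁻¹ • ν

/-- The one-step-ahead predictive measure `ξ_t = K_t π_{t-1}` (for `t ≥ 1`). -/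
noncomputable def pred (π0 : Measure X) (K : ℕ → X → Measure X) (g : ℕ → X → ℝ)
    (t : ℕ) : Measure X :=
  (filt π0 K g (t - 1)).bind (K t)

/-- The Bayesian evidence (marginal likelihood) `p_T(y_{1:T}|M) = ∏_{t=1}^T ξ_t(g_t)`. -/
noncomputable def evidence (π0 : Measure X) (K : ℕ → X → Measure X) (g : ℕ → X → ℝ)
    (T : ℕ) : ℝ :=
  ∏ t ∈ Finset.Icc 1 T, ∫ x, g t x ∂(pred π0 K g t)

/-- The nudged kernel `K_t^α(x,·)`: the pushforward of `K_t(x,·)` under the map `a t`. -/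
noncomputable def nudged (K : ℕ → X → Measure X) (a : ℕ → X → X) : ℕ → X → Measure X :=
  fun t x => (K t x).map (a t)

/-- The alternative nudged kernel `K̄_t^α(x,·) := K_t(α_{t-1}(x), ·)`. -/
noncomputable def altKernel (K : ℕ → X → Measure X) (a : ℕ → X → X) : ℕ → X → Measure X :=
  fun t x => K t (a (t - 1) x)

/-- The modified likelihoods `g_t^α := g_t ∘ α_t` of the alternative nudged model. -/
def altG (g : ℕ → X → ℝ) (a : ℕ → X → X) : ℕ → X → ℝ := fun t x => g t (a t x)

/-- Dobrushin (induced) norm of a Markov kernel: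
`‖K‖ = sup_{x,x'} ‖K(x,·) - K(x',·)‖_TV`. -/
noncomputable def dobNorm (K : X → Measure X) : ℝ :=
  ⨆ p : X × X, tvDist (K p.1) (K p.2)

open Filter Topology

section TotalVariation

lemma tvDist_nonneg (μ ν : Measure X) : 0 ≤ tvDist μ ν := ENNReal.toReal_nonneg

lemma tvDist_comm (μ ν : Measure X) : tvDist μ ν = tvDist ν μ := by
  rw [tvDist, tvDist, add_comm]

lemma iSup_measure_sub_le_one (μ ν : Measure X) [IsProbabilityMeasure μ] :
    ⨆ (F : Set X) (_ : MeasurableSet F), (μ F - ν F) ≤ 1 :=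
  iSup₂_le fun _ _ => tsub_le_self.trans prob_le_one

lemma lintegral_le_lintegral_add_mul_iSup_sub (μ ν : Measure X) {f : X → ℝ}
    (hf : Measurable f) (hf0 : ∀ x, 0 ≤ f x) {B : ℝ} (hfB : ∀ x, f x ≤ B) :
    ∫⁻ x, ENNReal.ofReal (f x) ∂μ ≤ ∫⁻ x, ENNReal.ofReal (f x) ∂ν +
      ENNReal.ofReal B * ⨆ (F : Set X) (_ : MeasurableSet F), (μ F - ν F) := by
  set S := ⨆ (F : Set X) (_ : MeasurableSet F), (μ F - ν F)
  have hlevel : ∀ t ∈ Set.Ioi (0 : ℝ),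
      μ {x | t < f x} ≤ ν {x | t < f x} + (Set.Ioc 0 B).indicator (fun _ => S) t := by
    intro t ht
    by_cases htB : t ≤ B
    · rw [Set.indicator_of_mem (Set.mem_Ioc.2 ⟨ht, htB⟩)]
      exact tsub_le_iff_left.1 (le_iSup₂_of_le _ (measurableSet_lt measurable_const hf) le_rfl)
    · have hempty : {x | t < f x} = ∅ :=
        Set.eq_empty_of_forall_notMem fun x hx => htB (le_trans (le_of_lt hx) (hfB x))
      simp [hempty]
  have layercake := fun ρ : Measure X =>
    lintegral_eq_lintegral_meas_lt ρ (ae_of_all _ hf0) hf.aemeasurable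
  rw [layercake μ, layercake ν]
  calc ∫⁻ t in Set.Ioi 0, μ {x | t < f x}
      ≤ ∫⁻ t in Set.Ioi 0, (ν {x | t < f x} + (Set.Ioc 0 B).indicator (fun _ => S) t) :=
        setLIntegral_mono' measurableSet_Ioi hlevel
    _ ≤ (∫⁻ t in Set.Ioi 0, ν {x | t < f x}) +
          ∫⁻ t, (Set.Ioc 0 B).indicator (fun _ => S) t := by
        rw [lintegral_add_right _ (measurable_const.indicator measurableSet_Ioc)]
        exact add_le_add_right (setLIntegral_le_lintegral _ _) _
    _ = _ := by
        rw [lintegral_indicator_const measurableSet_Ioc, Real.volume_Ioc, sub_zero, mul_comm]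

lemma integral_sub_integral_le_mul_tvDist (μ ν : Measure X) [IsProbabilityMeasure μ]
    [IsProbabilityMeasure ν] {f : X → ℝ} (hf : Measurable f) (hf0 : ∀ x, 0 ≤ f x) {B : ℝ}
    (hfB : ∀ x, f x ≤ B) :
    ∫ x, f x ∂μ - ∫ x, f x ∂ν ≤ B * tvDist μ ν := by
  have hB : 0 ≤ B := (hf0 _).trans (hfB (nonempty_of_isProbabilityMeasure μ).some)
  have hlint : ∀ ρ : Measure X, ∫ x, f x ∂ρ = (∫⁻ x, ENNReal.ofReal (f x) ∂ρ).toReal :=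
    fun ρ => integral_eq_lintegral_of_nonneg_ae (ae_of_all _ hf0) hf.aestronglyMeasurable
  have hν : ∫⁻ x, ENNReal.ofReal (f x) ∂ν ≠ ∞ :=
    ((Integrable.of_bound hf.aestronglyMeasurable B (ae_of_all _ fun x => by
      rw [Real.norm_of_nonneg (hf0 x)]; exact hfB x)).lintegral_lt_top).ne
  have hS := ne_top_of_le_ne_top one_ne_top (iSup_measure_sub_le_one μ ν)
  have hS' := ne_top_of_le_ne_top one_ne_top (iSup_measure_sub_le_one ν μ)
  rw [hlint μ, hlint ν, sub_le_iff_le_add', tvDist]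
  calc (∫⁻ x, ENNReal.ofReal (f x) ∂μ).toReal
      ≤ (∫⁻ x, ENNReal.ofReal (f x) ∂ν +
          ENNReal.ofReal B * ⨆ (F : Set X) (_ : MeasurableSet F), (μ F - ν F)).toReal :=
        ENNReal.toReal_mono (by finiteness)
          (lintegral_le_lintegral_add_mul_iSup_sub μ ν hf hf0 hfB)
    _ = (∫⁻ x, ENNReal.ofReal (f x) ∂ν).toReal +
          B * (⨆ (F : Set X) (_ : MeasurableSet F), (μ F - ν F)).toReal := by
        rw [ENNReal.toReal_add hν (by finiteness), ENNReal.toReal_mul, ENNReal.toReal_ofReal hB]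
    _ ≤ _ := add_le_add_right (mul_le_mul_of_nonneg_left
          (ENNReal.toReal_mono (ENNReal.add_ne_top.2 ⟨hS, hS'⟩) le_self_add) hB) _

lemma abs_integral_sub_integral_le_mul_tvDist (μ ν : Measure X) [IsProbabilityMeasure μ]
    [IsProbabilityMeasure ν] {f : X → ℝ} (hf : Measurable f) {C : ℝ}
    (hfC : ∀ x, |f x| ≤ C) :
    |∫ x, f x ∂μ - ∫ x, f x ∂ν| ≤ 2 * C * tvDist μ ν := by
  have hshift : ∀ (ρ : Measure X) [IsProbabilityMeasure ρ],
      ∫ x, (f x + C) ∂ρ = ∫ x, f x ∂ρ + C := fun ρ _ => by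
    rw [integral_add (Integrable.of_bound hf.aestronglyMeasurable C (ae_of_all _ hfC))
      (integrable_const C)]
    simp
  have hle : ∀ (ρ ρ' : Measure X) [IsProbabilityMeasure ρ] [IsProbabilityMeasure ρ'],
      ∫ x, f x ∂ρ - ∫ x, f x ∂ρ' ≤ 2 * C * tvDist ρ ρ' := fun ρ ρ' _ _ => by
    have := integral_sub_integral_le_mul_tvDist ρ ρ' (hf.add_const C) (B := 2 * C)
      (fun x => by linarith [neg_abs_le (f x), hfC x])
      (fun x => by linarith [le_abs_self (f x), hfC x])
    rwa [hshift ρ, hshift ρ', add_sub_add_right_eq_sub] at this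
  rw [abs_sub_le_iff]
  exact ⟨hle μ ν, tvDist_comm μ ν ▸ hle ν μ⟩

lemma tendsto_tvDist_nhds_of_norm_le {E : Type*} [NormedAddCommGroup E] [MeasurableSpace E]
    {κ : E → Measure E} {x : E}
    (h : ∀ ε > (0 : ℝ), ∃ δ > (0 : ℝ), ∀ x', ‖x - x'‖ ≤ δ → tvDist (κ x) (κ x') ≤ ε) :
    Tendsto (fun y => tvDist (κ y) (κ x)) (𝓝 x) (𝓝 0) := by
  rw [Metric.tendsto_nhds_nhds]
  intro ε hε
  obtain ⟨δ, hδ, hxδ⟩ := h (ε / 2) (half_pos hε)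
  refine ⟨δ, hδ, fun {y} hy => ?_⟩
  rw [Real.dist_0_eq_abs, abs_of_nonneg (tvDist_nonneg _ _), tvDist_comm]
  exact (hxδ y (by rw [← dist_eq_norm, dist_comm]; exact hy.le)).trans_lt (half_lt_self hε)

end TotalVariation

section MeasureFacts

variable {ξ : Measure X} {h : X → ℝ}

lemma integral_pos_of_forall_pos [NeZero ξ] (hint : Integrable h ξ) (hpos : ∀ x, 0 < h x) :
    0 < ∫ x, h x ∂ξ := by
  rw [integral_pos_iff_support_of_nonneg (fun x => (hpos x).le) hint,
    Function.support_eq_univ fun x => (hpos x).ne']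
  exact Measure.measure_univ_pos.2 (NeZero.ne ξ)

lemma integral_lt_integral_of_le_of_lt_on {f : X → ℝ} (hint : Integrable h ξ)
    (hfint : Integrable f ξ) (hle : ∀ x, h x ≤ f x) {A : Set X} (hA : 0 < ξ A)
    (hlt : ∀ x ∈ A, h x < f x) : ∫ x, h x ∂ξ < ∫ x, f x ∂ξ := by
  rw [← sub_pos, ← integral_sub hfint hint,
    integral_pos_iff_support_of_nonneg (fun x => sub_nonneg.2 (hle x)) (hfint.sub hint)]
  exact hA.trans_le (measure_mono fun x hx => (sub_pos.2 (hlt x hx)).ne')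

lemma abs_integral_le_of_abs_le [IsProbabilityMeasure ξ] {C : ℝ} (hC : ∀ x, |h x| ≤ C) :
    |∫ x, h x ∂ξ| ≤ C := by
  simpa using norm_integral_le_of_norm_le_const (μ := ξ)
    (ae_of_all _ fun x => (Real.norm_eq_abs (h x)).trans_le (hC x))

lemma integral_bind_of_abs_le {μ : Measure X} [IsFiniteMeasure μ] {κ : X → Measure X}
    (hκ : Measurable κ) [∀ x, IsProbabilityMeasure (κ x)] {f : X → ℝ} (hf : Measurable f)
    {C : ℝ} (hfC : ∀ x, |f x| ≤ C) :
    ∫ y, f y ∂μ.bind κ = ∫ x, ∫ y, f y ∂κ x ∂μ := by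
  let k : ProbabilityTheory.Kernel X X := ⟨κ, hκ⟩
  have : ProbabilityTheory.IsMarkovKernel k :=
    ⟨fun x => inferInstanceAs (IsProbabilityMeasure (κ x))⟩
  change ∫ y, f y ∂(μ.bind k) = ∫ x, ∫ y, f y ∂k x ∂μ
  rw [← Measure.snd_compProd, Measure.snd, integral_map measurable_snd.aemeasurable
    hf.aestronglyMeasurable, Measure.integral_compProd]
  exact Integrable.of_bound (hf.comp measurable_snd).aestronglyMeasurable C
    (ae_of_all _ fun p => hfC p.2)

lemma measurable_integral_of_measurable_kernel {κ : X → Measure X} (hκ : Measurable κ)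
    {f : X → ℝ} (hf : Measurable f) : Measurable fun x => ∫ y, f y ∂κ x :=
  (hf.stronglyMeasurable.integral_kernel (κ := ⟨κ, hκ⟩)).measurable

lemma map_bind_map {μ : Measure X} {f f' : X → X} (hf : Measurable f) (hf' : Measurable f')
    {κ : X → Measure X} (hκ : Measurable κ) :
    (μ.map f).bind (fun x => (κ x).map f') = (μ.bind fun x => κ (f x)).map f' := by
  have hκf' : Measurable fun x => (κ x).map f' := (Measure.measurable_map f' hf').comp hκ
  ext s hs
  rw [Measure.map_apply hf' hs, Measure.bind_apply hs hκf'.aemeasurable,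
    Measure.bind_apply (f := fun x => κ (f x)) (hf' hs) (hκ.comp hf).aemeasurable,
    lintegral_map (f := fun x => (κ x).map f' s) (Measure.measurable_coe hs |>.comp hκf') hf]
  exact lintegral_congr fun x => Measure.map_apply hf' hs

end MeasureFacts

section BayesUpdate

noncomputable def bayesUpdate (ξ : Measure X) (h : X → ℝ) : Measure X :=
  (ξ.withDensity (fun x => ENNReal.ofReal (h x)) Set.univ)⁻¹ •
    ξ.withDensity fun x => ENNReal.ofReal (h x)

lemma filt_succ (π0 : Measure X) (K : ℕ → X → Measure X) (g : ℕ → X → ℝ) (t : ℕ) :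
    filt π0 K g (t + 1) = bayesUpdate (pred π0 K g (t + 1)) (g (t + 1)) := rfl

variable {ξ : Measure X} {h : X → ℝ}

lemma withDensity_ofReal_univ (hint : Integrable h ξ) (h0 : ∀ x, 0 ≤ h x) :
    ξ.withDensity (fun x => ENNReal.ofReal (h x)) Set.univ =
      ENNReal.ofReal (∫ x, h x ∂ξ) := by
  rw [withDensity_apply _ MeasurableSet.univ, Measure.restrict_univ,
    ofReal_integral_eq_lintegral_ofReal hint (ae_of_all _ h0)]

lemma isProbabilityMeasure_bayesUpdate (hint : Integrable h ξ) (h0 : ∀ x, 0 ≤ h x)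
    (hZ : 0 < ∫ x, h x ∂ξ) : IsProbabilityMeasure (bayesUpdate ξ h) := by
  constructor
  rw [bayesUpdate, Measure.smul_apply, withDensity_ofReal_univ hint h0, smul_eq_mul,
    ENNReal.inv_mul_cancel (ENNReal.ofReal_pos.2 hZ).ne' ENNReal.ofReal_ne_top]

lemma integral_bayesUpdate (hh : Measurable h) (hint : Integrable h ξ) (h0 : ∀ x, 0 ≤ h x)
    (f : X → ℝ) :
    ∫ x, f x ∂bayesUpdate ξ h = (∫ x, h x ∂ξ)⁻¹ * ∫ x, h x * f x ∂ξ := by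
  rw [bayesUpdate, integral_smul_measure, withDensity_ofReal_univ hint h0, ENNReal.toReal_inv,
    ENNReal.toReal_ofReal (integral_nonneg h0), smul_eq_mul]
  congr 1
  refine (integral_withDensity_eq_integral_smul hh.real_toNNReal f).trans ?_
  congr with x
  rw [NNReal.smul_def, smul_eq_mul, Real.coe_toNNReal _ (h0 x)]

lemma bayesUpdate_map {f : X → X} (hf : Measurable f) (hh : Measurable h) :
    bayesUpdate (ξ.map f) h = (bayesUpdate ξ (fun x => h (f x))).map f := by
  have hdens : (ξ.map f).withDensity (fun x => ENNReal.ofReal (h x)) =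
      (ξ.withDensity fun x => ENNReal.ofReal (h (f x))).map f := by
    ext s hs
    rw [withDensity_apply _ hs, Measure.map_apply hf hs, withDensity_apply _ (hf hs),
      setLIntegral_map hs hh.ennreal_ofReal hf]
  rw [bayesUpdate, bayesUpdate, hdens, Measure.map_smul,
    Measure.map_apply hf MeasurableSet.univ, Set.preimage_univ]

end BayesUpdate

structure IsStateSpaceModel (π0 : Measure X) (K : ℕ → X → Measure X) (g : ℕ → X → ℝ) :
    Prop where
  isProbabilityMeasure_init : IsProbabilityMeasure π0
  measurable_kernel : ∀ t, Measurable (K t)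
  isProbabilityMeasure_kernel : ∀ t x, IsProbabilityMeasure (K t x)
  measurable_lik : ∀ t, Measurable (g t)
  lik_pos : ∀ t x, 0 < g t x
  lik_bdd : ∀ t, ∃ C, ∀ x, g t x ≤ C

namespace IsStateSpaceModel

variable {π0 : Measure X} {K : ℕ → X → Measure X} {g : ℕ → X → ℝ}

lemma exists_abs_lik_le (hM : IsStateSpaceModel π0 K g) (t : ℕ) :
    ∃ C, ∀ x, |g t x| ≤ C := by
  obtain ⟨C, hC⟩ := hM.lik_bdd t
  exact ⟨C, fun x => (abs_of_pos (hM.lik_pos t x)).trans_le (hC x)⟩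

lemma integrable_lik (hM : IsStateSpaceModel π0 K g) (t : ℕ) (ξ : Measure X)
    [IsFiniteMeasure ξ] : Integrable (g t) ξ := by
  obtain ⟨C, hC⟩ := hM.exists_abs_lik_le t
  exact Integrable.of_bound (hM.measurable_lik t).aestronglyMeasurable C (ae_of_all _ hC)

lemma isProbabilityMeasure_bind (hM : IsStateSpaceModel π0 K g) (t : ℕ) (μ : Measure X)
    [IsProbabilityMeasure μ] : IsProbabilityMeasure (μ.bind (K t)) :=
  MeasureTheory.isProbabilityMeasure_bind (hM.measurable_kernel t).aemeasurable
    (ae_of_all _ (hM.isProbabilityMeasure_kernel t))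

lemma isProbabilityMeasure_filt (hM : IsStateSpaceModel π0 K g) (t : ℕ) :
    IsProbabilityMeasure (filt π0 K g t) := by
  induction t with
  | zero => exact hM.isProbabilityMeasure_init
  | succ t ih =>
    have := hM.isProbabilityMeasure_bind (t + 1) (filt π0 K g t)
    exact isProbabilityMeasure_bayesUpdate (hM.integrable_lik _ _) (fun x => (hM.lik_pos _ x).le)
      (integral_pos_of_forall_pos (hM.integrable_lik _ _) (hM.lik_pos _))

lemma isProbabilityMeasure_pred (hM : IsStateSpaceModel π0 K g) (t : ℕ) :
    IsProbabilityMeasure (pred π0 K g t) :=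
  have := hM.isProbabilityMeasure_filt (t - 1)
  hM.isProbabilityMeasure_bind t _

lemma integral_lik_pos (hM : IsStateSpaceModel π0 K g) (t : ℕ) :
    0 < ∫ x, g t x ∂pred π0 K g t :=
  have := hM.isProbabilityMeasure_pred t
  integral_pos_of_forall_pos (hM.integrable_lik _ _) (hM.lik_pos t)

lemma evidence_pos (hM : IsStateSpaceModel π0 K g) (T : ℕ) : 0 < evidence π0 K g T :=
  Finset.prod_pos fun t _ => hM.integral_lik_pos t

lemma alt (hM : IsStateSpaceModel π0 K g) {b : ℕ → X → X} (hb : ∀ t, Measurable (b t)) :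
    IsStateSpaceModel π0 (altKernel K b) (altG g b) where
  isProbabilityMeasure_init := hM.isProbabilityMeasure_init
  measurable_kernel t := (hM.measurable_kernel t).comp (hb (t - 1))
  isProbabilityMeasure_kernel t _ := hM.isProbabilityMeasure_kernel t _
  measurable_lik t := (hM.measurable_lik t).comp (hb t)
  lik_pos t _ := hM.lik_pos t _
  lik_bdd t := (hM.lik_bdd t).imp fun _ hC _ => hC _

end IsStateSpaceModel

lemma evidence_succ (π0 : Measure X) (K : ℕ → X → Measure X) (g : ℕ → X → ℝ) (T : ℕ) :
    evidence π0 K g (T + 1) = evidence π0 K g T * ∫ x, g (T + 1) x ∂pred π0 K g (T + 1) :=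
  Finset.prod_Icc_succ_top (by omega) _

section NudgedModel

-- `b` agrees with `a` except at time `0`: the initial law is not nudged.
variable {π0 : Measure X} {K : ℕ → X → Measure X} {g : ℕ → X → ℝ} {a b : ℕ → X → X}
  (hK : ∀ t, Measurable (K t)) (hg : ∀ t, Measurable (g t)) (ha : ∀ t, Measurable (a t))
  (hb : ∀ t, Measurable (b t)) (hb0 : b 0 = id) (hba : ∀ t, t ≠ 0 → b t = a t)
include hK ha hb

lemma pred_nudged_of_filt_nudged {t : ℕ}
    (h : filt π0 (nudged K a) g (t - 1) =
      (filt π0 (altKernel K b) (altG g b) (t - 1)).map (b (t - 1))) :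
    pred π0 (nudged K a) g t = (pred π0 (altKernel K b) (altG g b) t).map (a t) := by
  unfold pred
  rw [h]
  exact map_bind_map (hb _) (ha t) (hK t)

include hg hb0 hba

lemma filt_nudged (t : ℕ) :
    filt π0 (nudged K a) g t = (filt π0 (altKernel K b) (altG g b) t).map (b t) := by
  induction t with
  | zero => rw [hb0, Measure.map_id]; rfl
  | succ t ih =>
    show _ = (bayesUpdate _ fun x => g (t + 1) (b (t + 1) x)).map (b (t + 1))
    rw [filt_succ, pred_nudged_of_filt_nudged hK ha hb ih, bayesUpdate_map (ha _) (hg _),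
      hba (t + 1) t.succ_ne_zero]
    rfl

lemma evidence_nudged (T : ℕ) :
    evidence π0 (nudged K a) g T = evidence π0 (altKernel K b) (altG g b) T := by
  refine Finset.prod_congr rfl fun t ht => ?_
  show _ = ∫ x, g t (b t x) ∂_
  rw [pred_nudged_of_filt_nudged hK ha hb (filt_nudged hK hg ha hb hb0 hba (t - 1)),
    integral_map (ha t).aemeasurable (hg t).aestronglyMeasurable,
    hba t (Nat.one_le_iff_ne_zero.1 (Finset.mem_Icc.1 ht).1)]

end NudgedModel

section Convergence

def TendstoBoundedIntegrals (μs : ℕ → Measure X) (μ : Measure X) : Prop :=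
  ∀ (C : ℝ) (f : ℕ → X → ℝ) (f' : X → ℝ), (∀ n, Measurable (f n)) → Measurable f' →
    (∀ n x, |f n x| ≤ C) → (∀ x, Tendsto (fun n => f n x) atTop (𝓝 (f' x))) →
    Tendsto (fun n => ∫ x, f n x ∂μs n) atTop (𝓝 (∫ x, f' x ∂μ))

lemma tendstoBoundedIntegrals_const (μ : Measure X) [IsFiniteMeasure μ] :
    TendstoBoundedIntegrals (fun _ => μ) μ := fun C _ _ hf _ hfC hlim =>
  tendsto_integral_of_dominated_convergence (fun _ => C) (fun n => (hf n).aestronglyMeasurable)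
    (integrable_const C) (fun n => ae_of_all _ (hfC n)) (ae_of_all _ hlim)

variable {μs : ℕ → Measure X} {μ : Measure X} [∀ n, IsProbabilityMeasure (μs n)]
  [IsProbabilityMeasure μ]

lemma tendstoBoundedIntegrals_of_tendsto_tvDist
    (h : Tendsto (fun n => tvDist (μs n) μ) atTop (𝓝 0)) : TendstoBoundedIntegrals μs μ := by
  intro C f f' hf hf' hfC hlim
  have hsplit : Tendsto (fun n => ∫ x, f n x ∂μs n - ∫ x, f n x ∂μ) atTop (𝓝 0) :=
    squeeze_zero_norm (fun n => abs_integral_sub_integral_le_mul_tvDist _ _ (hf n) (hfC n))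
      (by simpa using h.const_mul (2 * C))
  simpa using hsplit.add (tendstoBoundedIntegrals_const μ C f f' hf hf' hfC hlim)

lemma TendstoBoundedIntegrals.bind (h : TendstoBoundedIntegrals μs μ) {κ : X → Measure X}
    (hκ : Measurable κ) [∀ x, IsProbabilityMeasure (κ x)] {c : ℕ → X → X}
    (hc : ∀ n, Measurable (c n))
    (hκc : ∀ x, Tendsto (fun n => tvDist (κ (c n x)) (κ x)) atTop (𝓝 0)) :
    TendstoBoundedIntegrals (fun n => (μs n).bind fun x => κ (c n x)) (μ.bind κ) := by
  intro C f f' hf hf' hfC hlim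
  have hf'C : ∀ x, |f' x| ≤ C := fun x => le_of_tendsto' (hlim x).abs fun n => hfC n x
  have hbind : ∀ n, ∫ y, f n y ∂(μs n).bind (fun x => κ (c n x)) =
      ∫ x, ∫ y, f n y ∂κ (c n x) ∂μs n := fun n =>
    integral_bind_of_abs_le (κ := fun x => κ (c n x)) (hκ.comp (hc n)) (hf n) (hfC n)
  simp only [hbind, integral_bind_of_abs_le hκ hf' hf'C]
  exact h C _ _ (fun n => (measurable_integral_of_measurable_kernel hκ (hf n)).comp (hc n))
    (measurable_integral_of_measurable_kernel hκ hf')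
    (fun n x => abs_integral_le_of_abs_le (hfC n))
    (fun x => tendstoBoundedIntegrals_of_tendsto_tvDist (hκc x) C f f' hf hf' hfC hlim)

lemma TendstoBoundedIntegrals.bayesUpdate (h : TendstoBoundedIntegrals μs μ) {hs : ℕ → X → ℝ}
    {h' : X → ℝ} (hhs : ∀ n, Measurable (hs n)) (hh' : Measurable h') {C : ℝ}
    (hs0 : ∀ n x, 0 ≤ hs n x) (hsC : ∀ n x, hs n x ≤ C)
    (hlim : ∀ x, Tendsto (fun n => hs n x) atTop (𝓝 (h' x))) (hZ : 0 < ∫ x, h' x ∂μ) :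
    TendstoBoundedIntegrals (fun n => bayesUpdate (μs n) (hs n)) (bayesUpdate μ h') := by
  intro C' f f' hf hf' hfC hflim
  have hsC' : ∀ n x, |hs n x| ≤ C := fun n x => (abs_of_nonneg (hs0 n x)).trans_le (hsC n x)
  have hh'0 : ∀ x, 0 ≤ h' x := fun x => ge_of_tendsto' (hlim x) fun n => hs0 n x
  have hh'C : ∀ x, |h' x| ≤ C := fun x => le_of_tendsto' (hlim x).abs fun n => hsC' n x
  have hint : ∀ (ν : Measure X) [IsProbabilityMeasure ν] {k : X → ℝ}, Measurable k →
      (∀ x, |k x| ≤ C) → Integrable k ν := fun ν _ k hk hkC =>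
    Integrable.of_bound hk.aestronglyMeasurable C (ae_of_all _ hkC)
  simp only [integral_bayesUpdate (hhs _) (hint _ (hhs _) (hsC' _)) (hs0 _),
    integral_bayesUpdate hh' (hint _ hh' hh'C) hh'0]
  refine ((h C hs h' hhs hh' hsC' hlim).inv₀ hZ.ne').mul
    (h (C * C') _ _ (fun n => (hhs n).mul (hf n)) (hh'.mul hf') (fun n x => ?_)
      fun x => (hlim x).mul (hflim x))
  rw [abs_mul]
  exact mul_le_mul (hsC' n x) (hfC n x) (abs_nonneg _) ((abs_nonneg _).trans (hsC' n x))

end Convergence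

section AlternativeModel

variable [TopologicalSpace X] {π0 : Measure X} {K : ℕ → X → Measure X} {g : ℕ → X → ℝ}
  (hM : IsStateSpaceModel π0 K g)
  (hKtv : ∀ t x, Tendsto (fun y => tvDist (K t y) (K t x)) (𝓝 x) (𝓝 0))
  (hg : ∀ t, Continuous (g t)) {b : ℕ → ℕ → X → X} (hb : ∀ n t, Measurable (b n t)) {S : ℕ}
  (hbS : ∀ t ≤ S, ∀ x, Tendsto (fun n => b n t x) atTop (𝓝 x))
include hM hKtv hg hb hbS

lemma tendstoBoundedIntegrals_filt_alt {t : ℕ} (ht : t ≤ S) :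
    TendstoBoundedIntegrals (fun n => filt π0 (altKernel K (b n)) (altG g (b n)) t)
      (filt π0 K g t) := by
  have := hM.isProbabilityMeasure_init
  induction t with
  | zero => exact tendstoBoundedIntegrals_const π0
  | succ t ih =>
    have := fun n => (hM.alt (hb n)).isProbabilityMeasure_filt t
    have := hM.isProbabilityMeasure_filt t
    have := hM.isProbabilityMeasure_kernel (t + 1)
    have hpred : TendstoBoundedIntegrals
        (fun n => pred π0 (altKernel K (b n)) (altG g (b n)) (t + 1)) (pred π0 K g (t + 1)) :=
      (ih (by omega)).bind (hM.measurable_kernel (t + 1)) (fun n => hb n t)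
        fun x => (hKtv (t + 1) x).comp (hbS t (by omega) x)
    have := fun n => (hM.alt (hb n)).isProbabilityMeasure_pred (t + 1)
    have := hM.isProbabilityMeasure_pred (t + 1)
    obtain ⟨C, hC⟩ := hM.lik_bdd (t + 1)
    exact hpred.bayesUpdate (fun n => (hM.measurable_lik _).comp (hb n _)) (hM.measurable_lik _)
      (fun n x => (hM.lik_pos _ _).le) (fun n x => hC _)
      (fun x => (hg (t + 1)).continuousAt.tendsto.comp (hbS (t + 1) ht x))
      (hM.integral_lik_pos (t + 1))

lemma tendstoBoundedIntegrals_pred_alt {t : ℕ} (ht : t ≤ S + 1) :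
    TendstoBoundedIntegrals (fun n => pred π0 (altKernel K (b n)) (altG g (b n)) t)
      (pred π0 K g t) :=
  have := fun n => (hM.alt (hb n)).isProbabilityMeasure_filt (t - 1)
  have := hM.isProbabilityMeasure_filt (t - 1)
  have := hM.isProbabilityMeasure_kernel t
  (tendstoBoundedIntegrals_filt_alt hM hKtv hg hb hbS (t := t - 1) (by omega)).bind
    (hM.measurable_kernel t) (fun n => hb n (t - 1))
    fun x => (hKtv t x).comp (hbS (t - 1) (by omega) x)

theorem tendsto_evidence_alt {β : X → X} (hbβ : ∀ n, b n (S + 1) = β) :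
    Tendsto (fun n => evidence π0 (altKernel K (b n)) (altG g (b n)) (S + 1)) atTop
      (𝓝 (evidence π0 K g S * ∫ x, g (S + 1) (β x) ∂pred π0 K g (S + 1))) := by
  simp only [evidence_succ]
  refine Tendsto.mul (tendsto_finsetProd _ fun t ht => ?_) ?_
  · obtain ⟨C, hC⟩ := hM.exists_abs_lik_le t
    have htS := (Finset.mem_Icc.1 ht).2
    exact tendstoBoundedIntegrals_pred_alt hM hKtv hg hb hbS (by omega) C _ (g t)
      (fun n => (hM.measurable_lik t).comp (hb n t)) (hM.measurable_lik t) (fun n x => hC _)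
      fun x => (hg t).continuousAt.tendsto.comp (hbS t htS x)
  · obtain ⟨C, hC⟩ := hM.exists_abs_lik_le (S + 1)
    have hβ : Measurable β := hbβ 0 ▸ hb 0 (S + 1)
    exact tendstoBoundedIntegrals_pred_alt hM hKtv hg hb hbS le_rfl C _ _
      (fun n => (hM.measurable_lik _).comp (hb n _)) ((hM.measurable_lik _).comp hβ)
      (fun n x => hC _) fun x => by simp only [altG, hbβ]; exact tendsto_const_nhds

end AlternativeModel

theorem tendsto_evidence_nudged [TopologicalSpace X] {π0 : Measure X} {K : ℕ → X → Measure X}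
    {g : ℕ → X → ℝ} (hM : IsStateSpaceModel π0 K g)
    (hKtv : ∀ t x, Tendsto (fun y => tvDist (K t y) (K t x)) (𝓝 x) (𝓝 0))
    (hg : ∀ t, Continuous (g t)) {a : ℕ → ℕ → X → X} (ha : ∀ n t, Measurable (a n t)) {S : ℕ}
    (haS : ∀ t, 1 ≤ t → t ≤ S → ∀ x, Tendsto (fun n => a n t x) atTop (𝓝 x)) {β : X → X}
    (haβ : ∀ n, a n (S + 1) = β) :
    Tendsto (fun n => evidence π0 (nudged K (a n)) g (S + 1)) atTop
      (𝓝 (evidence π0 K g S * ∫ x, g (S + 1) (β x) ∂pred π0 K g (S + 1))) := by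
  let b n := Function.update (a n) 0 id
  have hb : ∀ n t, Measurable (b n t) := fun n t => by
    rcases eq_or_ne t 0 with rfl | ht
    · simpa [b] using measurable_id
    · simpa [b, ht] using ha n t
  have hbS : ∀ t ≤ S, ∀ x, Tendsto (fun n => b n t x) atTop (𝓝 x) := fun t ht x => by
    rcases eq_or_ne t 0 with rfl | ht0
    · simpa [b] using tendsto_const_nhds
    · simpa [b, ht0] using haS t (Nat.one_le_iff_ne_zero.2 ht0) ht x
  have hnudged : ∀ n, evidence π0 (nudged K (a n)) g (S + 1) =
      evidence π0 (altKernel K (b n)) (altG g (b n)) (S + 1) := fun n =>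
    evidence_nudged hM.measurable_kernel hM.measurable_lik (ha n) (hb n)
      (Function.update_self _ _ _) (fun t ht => Function.update_of_ne ht _ _) _
  simp only [hnudged]
  exact tendsto_evidence_alt hM hKtv hg hb hbS fun n =>
    (Function.update_of_ne S.succ_ne_zero _ _).trans (haβ n)

lemma continuous_of_norm_sub_le {E F : Type*} [SeminormedAddCommGroup E]
    [SeminormedAddCommGroup F] {f : E → F} {L : ℝ}
    (hf : ∀ y z, ‖f y - f z‖ ≤ L * ‖y - z‖) : Continuous f :=
  (LipschitzWith.of_dist_le' fun y z => by simpa only [dist_eq_norm] using hf y z).continuous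

section GradientStep

open scoped InnerProductSpace

variable {E : Type*} [NormedAddCommGroup E] [InnerProductSpace ℝ E] [CompleteSpace E]
  {φ : E → ℝ} {L : ℝ}

/- The descent lemma, in the form of a lower bound: by the mean value theorem applied to `k`,
whose derivative `k'` is nonnegative on `(0, 1)` by Cauchy–Schwarz and the Lipschitz bound. -/
lemma add_inner_gradient_sub_le (hφ : Differentiable ℝ φ)
    (hL : ∀ y z, ‖gradient φ y - gradient φ z‖ ≤ L * ‖y - z‖) (x v : E) :
    φ x + ⟪gradient φ x, v⟫_ℝ - L / 2 * ‖v‖ ^ 2 ≤ φ (x + v) := by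
  let k : ℝ → ℝ := fun s =>
    φ (x + s • v) - s * ⟪gradient φ x, v⟫_ℝ + L / 2 * ‖v‖ ^ 2 * s ^ 2
  let k' : ℝ → ℝ := fun s =>
    ⟪gradient φ (x + s • v) - gradient φ x, v⟫_ℝ + L * ‖v‖ ^ 2 * s
  have hk : ∀ s, HasDerivAt k (k' s) s := by
    intro s
    have hline : HasDerivAt (fun s : ℝ => x + s • v) v s := by
      simpa using ((hasDerivAt_id s).smul_const v).const_add x
    have hφline :
        HasDerivAt (fun s => φ (x + s • v)) ⟪gradient φ (x + s • v), v⟫_ℝ s := by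
      rw [inner_gradient_left]
      exact (hφ _).hasFDerivAt.comp_hasDerivAt s hline
    refine ((hφline.sub ((hasDerivAt_id' s).mul_const ⟪gradient φ x, v⟫_ℝ)).add
      ((hasDerivAt_pow 2 s).const_mul (L / 2 * ‖v‖ ^ 2))).congr_deriv ?_
    simp only [k', inner_sub_left]
    ring
  obtain ⟨c, hc, hkc⟩ := exists_hasDerivAt_eq_slope k k' zero_lt_one
    (fun s _ => (hk s).continuousAt.continuousWithinAt) fun s _ => hk s
  have hlip : ‖gradient φ (x + c • v) - gradient φ x‖ ≤ L * (c * ‖v‖) := by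
    simpa [norm_smul, abs_of_pos hc.1] using hL (x + c • v) x
  have hinner := (abs_le.1 ((abs_real_inner_le_norm _ v).trans
    (mul_le_mul_of_nonneg_right hlip (norm_nonneg v)))).1
  have hk01 : 0 ≤ (k 1 - k 0) / (1 - 0) := hkc ▸ by simp only [k']; nlinarith
  simp only [k, one_smul, zero_smul, add_zero, one_mul, zero_mul, one_pow, mul_one,
    zero_pow two_ne_zero, mul_zero, sub_zero, div_one] at hk01
  linarith

lemma add_sq_norm_gradient_div_le_gradient_step (hφ : Differentiable ℝ φ)
    (hL : ∀ y z, ‖gradient φ y - gradient φ z‖ ≤ L * ‖y - z‖) (hLpos : 0 < L) (x : E) :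
    φ x + ‖gradient φ x‖ ^ 2 / (2 * L) ≤ φ (x + L⁻¹ • gradient φ x) := by
  have := add_inner_gradient_sub_le hφ hL x (L⁻¹ • gradient φ x)
  rw [real_inner_smul_right, real_inner_self_eq_norm_sq, norm_smul,
    Real.norm_of_nonneg (inv_nonneg.2 hLpos.le), mul_pow] at this
  convert this using 1
  field_simp
  ring

lemma integral_lt_integral_comp_gradient_step [MeasurableSpace E] [OpensMeasurableSpace E]
    {ξ : Measure E} [IsFiniteMeasure ξ] {g : E → ℝ} (hg : Continuous g)
    (hgpos : ∀ x, 0 < g x) {C : ℝ} (hgC : ∀ x, g x ≤ C)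
    (hdiff : Differentiable ℝ fun x => Real.log (g x))
    (hL : ∀ y z, ‖gradient (fun x => Real.log (g x)) y - gradient (fun x => Real.log (g x)) z‖
      ≤ L * ‖y - z‖) (hLpos : 0 < L) {A : Set E} (hA : 0 < ξ A)
    (hAgrad : ∀ x ∈ A, gradient (fun y => Real.log (g y)) x ≠ 0) :
    ∫ x, g x ∂ξ < ∫ x, g (x + L⁻¹ • gradient (fun y => Real.log (g y)) x) ∂ξ := by
  have hstep := add_sq_norm_gradient_div_le_gradient_step hdiff hL hLpos
  have hint : ∀ {f : E → E}, Continuous f → Integrable (fun x => g (f x)) ξ := fun hf =>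
    Integrable.of_bound (hg.comp hf).aestronglyMeasurable C
      (ae_of_all _ fun x => (Real.norm_of_nonneg (hgpos _).le).trans_le (hgC _))
  refine integral_lt_integral_of_le_of_lt_on (hint continuous_id)
    (hint (continuous_id.add ((continuous_of_norm_sub_le hL).const_smul _))) (fun x => ?_) hA
    fun x hx => ?_
  · refine (Real.log_le_log_iff (hgpos _) (hgpos _)).1
      ((le_add_of_nonneg_right ?_).trans (hstep x))
    positivity
  · refine (Real.log_lt_log_iff (hgpos _) (hgpos _)).1
      ((lt_add_of_pos_right _ ?_).trans_le (hstep x))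
    have := norm_pos_iff.2 (hAgrad x hx)
    positivity

end GradientStep

theorem gradient_nudging_increases_evidence_general
    {d : ℕ}
    (π0 : Measure (EuclideanSpace ℝ (Fin d))) (hπ0 : IsProbabilityMeasure π0)
    (K : ℕ → EuclideanSpace ℝ (Fin d) → Measure (EuclideanSpace ℝ (Fin d)))
    (hKmeas : ∀ t, Measurable (K t))
    (hKprob : ∀ t x, IsProbabilityMeasure (K t x))
    (g : ℕ → EuclideanSpace ℝ (Fin d) → ℝ)
    (hgpos : ∀ t x, 0 < g t x)
    -- (d) each `g_t` is continuous and bounded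
    (hgcont : ∀ t, Continuous (g t))
    (hgbdd : ∀ t, ∃ C : ℝ, ∀ x, g t x ≤ C)
    -- (a)/(b): `log g_t` is differentiable (finite gradient) with Lipschitz gradient
    (hdiff : ∀ t, Differentiable ℝ fun x => Real.log (g t x))
    (L : ℕ → ℝ)
    (hLip : ∀ t (x x' : EuclideanSpace ℝ (Fin d)),
        ‖gradient (fun y => Real.log (g t y)) x -
            gradient (fun y => Real.log (g t y)) x'‖ ≤ L t * ‖x - x'‖)
    (T : ℕ) (hT : 1 ≤ T)
    -- (c) sets of positive predictive mass on which the gradient does not vanish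
    (A : ℕ → Set (EuclideanSpace ℝ (Fin d)))
    (hApos : ∀ t, 1 ≤ t → t ≤ T → 0 < pred π0 K g t (A t))
    (hAgrad : ∀ t, 1 ≤ t → t ≤ T →
        ∀ x ∈ A t, gradient (fun y => Real.log (g t y)) x ≠ 0)
    -- (d) Assumption A2(ii): the kernels are continuous in total variation
    (hKtv : ∀ t (x : EuclideanSpace ℝ (Fin d)), ∀ ε > (0 : ℝ), ∃ δ > (0 : ℝ),
        ∀ x', ‖x - x'‖ ≤ δ → tvDist (K t x) (K t x') ≤ ε) :
    ∃ γ : ℕ → ℝ, (∀ t, 0 < γ t) ∧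
      evidence π0 K g T ≤
        evidence π0
          (nudged K fun t x => x + γ t • gradient (fun y => Real.log (g t y)) x) g T := by
  obtain ⟨S, rfl⟩ : ∃ S, T = S + 1 := ⟨T - 1, by omega⟩
  have hM : IsStateSpaceModel π0 K g :=
    ⟨hπ0, hKmeas, hKprob, fun t => (hgcont t).measurable, hgpos, hgbdd⟩
  set Λ := max (L (S + 1)) 1
  have hΛ : 0 < Λ := zero_lt_one.trans_le (le_max_right _ _)
  let γ : ℕ → ℕ → ℝ := fun n t => if t = S + 1 then Λ⁻¹ else ((n : ℝ) + 1)⁻¹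
  have hγ : ∀ n t, 0 < γ n t := fun n t => by dsimp only [γ]; split_ifs <;> positivity
  let α : ℕ → ℕ → EuclideanSpace ℝ (Fin d) → EuclideanSpace ℝ (Fin d) :=
    fun n t x => x + γ n t • gradient (fun y => Real.log (g t y)) x
  have hα : ∀ n t, Measurable (α n t) := fun n t =>
    (continuous_id.add ((continuous_of_norm_sub_le (hLip t)).const_smul (γ n t))).measurable
  have hα_lim : ∀ t, 1 ≤ t → t ≤ S → ∀ x, Tendsto (fun n => α n t x) atTop (𝓝 x) := by
    intro t _ htS x
    have hγ_lim : Tendsto (fun n => γ n t) atTop (𝓝 0) := by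
      simpa [γ, show t ≠ S + 1 by omega] using
        tendsto_one_div_add_atTop_nhds_zero_nat (𝕜 := ℝ)
    simpa using
      tendsto_const_nhds.add (hγ_lim.smul_const (gradient (fun y => Real.log (g t y)) x))
  have hαT : ∀ n,
      α n (S + 1) = fun x => x + Λ⁻¹ • gradient (fun y => Real.log (g (S + 1) y)) x :=
    fun n => by simp [α, γ]
  have hlim := tendsto_evidence_nudged hM (fun t x => tendsto_tvDist_nhds_of_norm_le (hKtv t x))
    hgcont hα hα_lim hαT
  have := hM.isProbabilityMeasure_pred (S + 1)
  obtain ⟨C, hC⟩ := hgbdd (S + 1)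
  have hgain := integral_lt_integral_comp_gradient_step (hgcont _) (hgpos _) hC (hdiff _)
    (fun y z => (hLip _ y z).trans (mul_le_mul_of_nonneg_right (le_max_left _ _) (norm_nonneg _)))
    hΛ (hApos _ hT le_rfl) (hAgrad _ hT le_rfl)
  rw [← mul_lt_mul_iff_right₀ (hM.evidence_pos S), ← evidence_succ] at hgain
  obtain ⟨n, hn⟩ := (hlim.eventually (eventually_gt_nhds hgain)).exists
  exact ⟨γ n, hγ n, hn.le⟩

/-- **Corollary (gradient-ascent nudging increases the evidence).**
Let `α_t(x,γ) := x + γ∇log g_t(x)` be the gradient-ascent nudging maps.  If the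
partial derivatives of `log g_t` are finite (here: `log g_t` is differentiable with
`L_t`-Lipschitz gradient), there are sets `A_t` with `ξ_t(A_t) > 0` on which
`∇log g_t ≠ 0`, the kernels are continuous in total variation and each `g_t` is
continuous and bounded, then there exist positive step sizes `γ_1, …, γ_T` with
`p_T(y_{1:T} | M^α) ≥ p_T(y_{1:T} | M)`. -/
theorem gradient_nudging_increases_evidence
    {d : ℕ}
    (π0 : Measure (EuclideanSpace ℝ (Fin d))) (hπ0 : IsProbabilityMeasure π0)
    (K : ℕ → EuclideanSpace ℝ (Fin d) → Measure (EuclideanSpace ℝ (Fin d)))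
    (hKmeas : ∀ t, Measurable (K t))
    (hKprob : ∀ t x, IsProbabilityMeasure (K t x))
    (g : ℕ → EuclideanSpace ℝ (Fin d) → ℝ)
    (hgpos : ∀ t x, 0 < g t x)
    -- (d) each `g_t` is continuous and bounded
    (hgcont : ∀ t, Continuous (g t))
    (hgbdd : ∀ t, ∃ C : ℝ, ∀ x, g t x ≤ C)
    -- (a)/(b): `log g_t` is differentiable (finite gradient) with Lipschitz gradient
    (hdiff : ∀ t, Differentiable ℝ fun x => Real.log (g t x))
    (L : ℕ → ℝ)
    (hLip : ∀ t (x x' : EuclideanSpace ℝ (Fin d)),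
        ‖gradient (fun y => Real.log (g t y)) x -
            gradient (fun y => Real.log (g t y)) x'‖ ≤ L t * ‖x - x'‖)
    (T : ℕ) (hT : 1 ≤ T)
    -- (c) sets of positive predictive mass on which the gradient does not vanish
    (A : ℕ → Set (EuclideanSpace ℝ (Fin d)))
    (hAmeas : ∀ t, MeasurableSet (A t))
    (hApos : ∀ t, 1 ≤ t → t ≤ T → 0 < pred π0 K g t (A t))
    (hAgrad : ∀ t, 1 ≤ t → t ≤ T →
        ∀ x ∈ A t, gradient (fun y => Real.log (g t y)) x ≠ 0)
    -- (d) Assumption A2(ii): the kernels are continuous in total variation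
    (hKtv : ∀ t (x : EuclideanSpace ℝ (Fin d)), ∀ ε > (0 : ℝ), ∃ δ > (0 : ℝ),
        ∀ x', ‖x - x'‖ ≤ δ → tvDist (K t x) (K t x') ≤ ε) :
    ∃ γ : ℕ → ℝ, (∀ t, 0 < γ t) ∧
      evidence π0 K g T ≤
        evidence π0
          (nudged K fun t x => x + γ t • gradient (fun y => Real.log (g t y)) x) g T :=
  gradient_nudging_increases_evidence_general π0 hπ0 K hKmeas hKprob g hgpos hgcont hgbdd hdiff L
    hLip T hT A hApos hAgrad hKtv

end Nudging
end

section
/- Let M = (π₀, K, g) be a state-space model, α_t : 𝒳 → 𝒳 measurable maps with α₀ the identity, M^α the nudged model and M̄^α the alternative nudged model. Then for every t ≥ 1 the normalisation constants coincide, ξ̄_t^α(g_t^α) = ξ_t^α(g_t), and consequently the two models have the same Bayesian evidence: p_T(y_{1:T} | M̄^α) = ∏_{t=1}^T ξ̄_t^α(g_t^α) = ∏_{t=1}^T ξ_t^α(g_t) = p_T(y_{1:T} | M^α) for every T ≥ 1. -/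
open MeasureTheory ENNReal

/-!
By induction on `t`, the filter of the nudged model is the pushforward under `α_t` of the
filter of the alternative model: binding against `K_t` and then pushing forward by `α_t` is the
same as binding against `K_t ∘ α_{t-1}` after pushing forward by `α_{t-1}`, and reweighting by
`g_t` after pushing forward by `α_t` is reweighting by `g_t ∘ α_t` before. The same then holds
for the predictive measures, and the change of variables `x ↦ α_t x` turns `ξ̄_t^α(g_t ∘ α_t)`
into `ξ_t^α(g_t)`.
-/

namespace MeasureTheory

variable {α β γ : Type*} [MeasurableSpace α] [MeasurableSpace β] [MeasurableSpace γ]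

theorem Measure.bind_map (μ : Measure α) {f : α → β} (hf : Measurable f) {κ : β → Measure γ}
    (hκ : Measurable κ) : (μ.map f).bind κ = μ.bind (κ ∘ f) := by
  ext s hs
  rw [bind_apply hs hκ.aemeasurable, bind_apply hs (hκ.comp hf).aemeasurable]
  exact lintegral_map ((measurable_coe hs).comp hκ) hf

theorem Measure.map_bind (μ : Measure α) {κ : α → Measure β} (hκ : Measurable κ) {f : β → γ}
    (hf : Measurable f) : (μ.bind κ).map f = μ.bind fun x => (κ x).map f := by
  have hκf : Measurable fun x => (κ x).map f := (measurable_map f hf).comp hκ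
  ext s hs
  rw [map_apply hf hs, bind_apply (hf hs) hκ.aemeasurable, bind_apply hs hκf.aemeasurable]
  exact lintegral_congr fun x => (map_apply hf hs).symm

theorem withDensity_map (μ : Measure α) {f : α → β} (hf : Measurable f) {h : β → ℝ≥0∞}
    (hh : Measurable h) : (μ.map f).withDensity h = (μ.withDensity (h ∘ f)).map f := by
  ext s hs
  rw [withDensity_apply _ hs, Measure.map_apply hf hs, withDensity_apply _ (hf hs),
    setLIntegral_map hs hh hf, Function.comp_def]

theorem Measure.map_normalize (μ : Measure α) {f : α → β} (hf : Measurable f) :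
    (μ.map f Set.univ)⁻¹ • μ.map f = ((μ Set.univ)⁻¹ • μ).map f := by
  rw [Measure.map_smul, Measure.map_apply hf MeasurableSet.univ, Set.preimage_univ]

end MeasureTheory

namespace Nudging

variable {X : Type*} [MeasurableSpace X] {K : ℕ → X → Measure X} {a : ℕ → X → X}

theorem map_bind_nudged (hK : ∀ t, Measurable (K t)) (ha : ∀ t, Measurable (a t))
    (μ : Measure X) (s t : ℕ) :
    (μ.map (a s)).bind (nudged K a t) = (μ.bind fun x => K t (a s x)).map (a t) := by
  have hN : Measurable (nudged K a t) := (Measure.measurable_map _ (ha t)).comp (hK t)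
  rw [Measure.bind_map _ (ha s) hN]
  exact (Measure.map_bind _ ((hK t).comp (ha s)) (ha t)).symm

theorem filt_nudged_eq_map (π0 : Measure X) (hK : ∀ t, Measurable (K t)) {g : ℕ → X → ℝ}
    (hg : ∀ t, Measurable (g t)) (ha : ∀ t, Measurable (a t)) (ha0 : a 0 = id) (t : ℕ) :
    filt π0 (nudged K a) g t = (filt π0 (altKernel K a) (altG g a) t).map (a t) := by
  induction t with
  | zero => rw [ha0, Measure.map_id]; rfl
  | succ t ih =>
    rw [filt, filt, ih, map_bind_nudged hK ha,
      withDensity_map _ (ha _) (hg _).ennreal_ofReal,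
      Measure.map_normalize _ (ha _)]
    rfl

theorem pred_nudged_eq_map (π0 : Measure X) (hK : ∀ t, Measurable (K t)) {g : ℕ → X → ℝ}
    (hg : ∀ t, Measurable (g t)) (ha : ∀ t, Measurable (a t)) (ha0 : a 0 = id) (t : ℕ) :
    pred π0 (nudged K a) g t = (pred π0 (altKernel K a) (altG g a) t).map (a t) := by
  rw [pred, pred, filt_nudged_eq_map π0 hK hg ha ha0, map_bind_nudged hK ha]
  rfl

theorem integral_altG_pred_eq_integral_pred_nudged (π0 : Measure X)
    (hK : ∀ t, Measurable (K t)) {g : ℕ → X → ℝ} (hg : ∀ t, Measurable (g t))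
    (ha : ∀ t, Measurable (a t)) (ha0 : a 0 = id) (t : ℕ) :
    ∫ x, altG g a t x ∂(pred π0 (altKernel K a) (altG g a) t) =
      ∫ x, g t x ∂(pred π0 (nudged K a) g t) := by
  rw [pred_nudged_eq_map π0 hK hg ha ha0, integral_map (ha t).aemeasurable
    (hg t).aestronglyMeasurable]
  rfl

theorem nudged_alt_same_evidence_general
    {X : Type*} [MeasurableSpace X]
    (π0 : Measure X)
    (K : ℕ → X → Measure X)
    (hKmeas : ∀ t, Measurable (K t))
    (g : ℕ → X → ℝ)
    (hgmeas : ∀ t, Measurable (g t))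
    (a : ℕ → X → X) (hameas : ∀ t, Measurable (a t)) (ha0 : a 0 = fun x => x) :
    (∀ t, 1 ≤ t →
      ∫ x, altG g a t x ∂(pred π0 (altKernel K a) (altG g a) t) =
        ∫ x, g t x ∂(pred π0 (nudged K a) g t)) ∧
    (∀ T, 1 ≤ T →
      evidence π0 (altKernel K a) (altG g a) T = evidence π0 (nudged K a) g T) := by
  have hint := integral_altG_pred_eq_integral_pred_nudged π0 hKmeas hgmeas hameas ha0
  exact ⟨fun t _ => hint t, fun T _ => Finset.prod_congr rfl fun t _ => hint t⟩

/-- **Remark (the nudged and alternative nudged models have the same evidence).**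
With `α₀` the identity, the normalisation constants of the nudged model `M^α` and of
the alternative nudged model `M̄^α` coincide, `ξ̄_t^α(g_t^α) = ξ_t^α(g_t)` for every
`t ≥ 1`, and consequently `p_T(y_{1:T}|M̄^α) = p_T(y_{1:T}|M^α)` for every `T ≥ 1`. -/
theorem nudged_alt_same_evidence
    {X : Type*} [MeasurableSpace X]
    (π0 : Measure X) (hπ0 : IsProbabilityMeasure π0)
    (K : ℕ → X → Measure X)
    (hKmeas : ∀ t, Measurable (K t))
    (hKprob : ∀ t x, IsProbabilityMeasure (K t x))
    (g : ℕ → X → ℝ)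
    (hg0 : ∀ t x, 0 ≤ g t x)
    (hgmeas : ∀ t, Measurable (g t))
    (hgbdd : ∀ t, ∃ C : ℝ, ∀ x, g t x ≤ C)
    (a : ℕ → X → X) (hameas : ∀ t, Measurable (a t)) (ha0 : a 0 = fun x => x) :
    (∀ t, 1 ≤ t →
      ∫ x, altG g a t x ∂(pred π0 (altKernel K a) (altG g a) t) =
        ∫ x, g t x ∂(pred π0 (nudged K a) g t)) ∧
    (∀ T, 1 ≤ T →
      evidence π0 (altKernel K a) (altG g a) T = evidence π0 (nudged K a) g T) :=
  nudged_alt_same_evidence_general π0 K hKmeas g hgmeas a hameas ha0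

end Nudging
end
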